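/- arXiv:1607.01239 — 2 statements merged into one kernel-verified Lean document; each statement's English description precedes it below -/
import Mathlib

section
/- Let H: T*Q × ℝ → ℝ, π: T*Q × ℝ → Q × ℝ the fibration, and γ a section of π written locally as γ(q, t) = (q, γʲ(q, t), t), with γ_t closed as a 1-form on Q for each fixed t (∂γʲ/∂qⁱ = ∂γⁱ/∂qʲ). Define R_H^γ = Tπ ∘ R_H ∘ γ. Then R_H and R_H^γ are γ-related (Tγ(R_H^γ) = R_H ∘ γ) if and only if ∂γʲ/∂t + Σᵢ (∂H/∂pᵢ ∘ γ)(∂γʲ/∂qⁱ) + (∂H/∂qʲ ∘ γ) = 0 for all j. -/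
/-- Partial derivative `∂H/∂qⁱ` of `H : T*Q × ℝ → ℝ` in canonical coordinates
`z = (q, p, t)` on `T*Q × ℝ` with `Q = ℝⁿ`. -/
noncomputable def Hq (n : ℕ) (H : (Fin n → ℝ) × (Fin n → ℝ) × ℝ → ℝ) (i : Fin n)
    (z : (Fin n → ℝ) × (Fin n → ℝ) × ℝ) : ℝ :=
  fderiv ℝ H z (Pi.single i 1, 0, 0)

/-- Partial derivative `∂H/∂pᵢ`. -/
noncomputable def Hp (n : ℕ) (H : (Fin n → ℝ) × (Fin n → ℝ) × ℝ → ℝ) (i : Fin n)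
    (z : (Fin n → ℝ) × (Fin n → ℝ) × ℝ) : ℝ :=
  fderiv ℝ H z (0, Pi.single i 1, 0)

/-- Partial derivative `∂H/∂t`. -/
noncomputable def Ht (n : ℕ) (H : (Fin n → ℝ) × (Fin n → ℝ) × ℝ → ℝ)
    (z : (Fin n → ℝ) × (Fin n → ℝ) × ℝ) : ℝ :=
  fderiv ℝ H z (0, 0, 1)

/-- The Reeb vector field `R_H = ∂/∂t + Σᵢ (∂H/∂pᵢ) ∂/∂qⁱ − Σᵢ (∂H/∂qⁱ) ∂/∂pᵢ` of the
cosymplectic structure `(dt, Ω_H)` on `T*Q × ℝ`. -/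
noncomputable def RH (n : ℕ) (H : (Fin n → ℝ) × (Fin n → ℝ) × ℝ → ℝ)
    (z : (Fin n → ℝ) × (Fin n → ℝ) × ℝ) : (Fin n → ℝ) × (Fin n → ℝ) × ℝ :=
  (fun i => Hp n H i z, fun i => -Hq n H i z, 1)

/-- The section `γ(q, t) = (q, γʲ(q, t), t)` of `π : T*Q × ℝ → Q × ℝ`. -/
def sectionLift (n : ℕ) (γ : (Fin n → ℝ) × ℝ → Fin n → ℝ)
    (x : (Fin n → ℝ) × ℝ) : (Fin n → ℝ) × (Fin n → ℝ) × ℝ :=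
  (x.1, γ x, x.2)

/-- The projected vector field `R_H^γ = Tπ ∘ R_H ∘ γ` on `Q × ℝ`. -/
noncomputable def RHproj (n : ℕ) (H : (Fin n → ℝ) × (Fin n → ℝ) × ℝ → ℝ)
    (γ : (Fin n → ℝ) × ℝ → Fin n → ℝ) (x : (Fin n → ℝ) × ℝ) : (Fin n → ℝ) × ℝ :=
  (fun i => Hp n H i (sectionLift n γ x), 1)

theorem sectionLift_fderiv' (n : ℕ) (γ : (Fin n → ℝ) × ℝ → Fin n → ℝ)
    (hγ : ContDiff ℝ (⊤ : ℕ∞) γ) (x : (Fin n → ℝ) × ℝ) (v : (Fin n → ℝ) × ℝ) :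
    fderiv ℝ (fun x : (Fin n → ℝ) × ℝ => ((x.1 : Fin n → ℝ), γ x, x.2)) x v
      = (v.1, fderiv ℝ γ x v, v.2) := by
  have hd : HasFDerivAt γ (fderiv ℝ γ x) x :=
    ((hγ.differentiable (by simp)) x).hasFDerivAt
  have h : HasFDerivAt (fun x : (Fin n → ℝ) × ℝ => ((x.1 : Fin n → ℝ), γ x, x.2))
      ((ContinuousLinearMap.fst ℝ (Fin n → ℝ) ℝ).prod
        ((fderiv ℝ γ x).prod (ContinuousLinearMap.snd ℝ (Fin n → ℝ) ℝ))) x :=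
    HasFDerivAt.prodMk hasFDerivAt_fst (HasFDerivAt.prodMk hd hasFDerivAt_snd)
  rw [h.fderiv]
  rfl

theorem fderiv_decomp (n : ℕ) (γ : (Fin n → ℝ) × ℝ → Fin n → ℝ)
    (x : (Fin n → ℝ) × ℝ) (c : Fin n → ℝ) (j : Fin n) :
    fderiv ℝ γ x (c, 1) j
      = fderiv ℝ γ x (0, 1) j + ∑ i, c i * fderiv ℝ γ x (Pi.single i 1, 0) j := by
  have hv : ((c, 1) : (Fin n → ℝ) × ℝ)
      = (0, 1) + ∑ i, c i • ((Pi.single i 1 : Fin n → ℝ), (0 : ℝ)) := by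
    ext k
    · simp [Prod.fst_sum, Finset.sum_apply, Pi.single_apply, mul_ite,
        Finset.sum_ite_eq']
    · simp [Prod.snd_sum]
  rw [hv, map_add, map_sum]
  simp only [map_smul]
  simp [Finset.sum_apply]

/-- for a section `γ(q,t) = (q, γʲ(q,t), t)` of `π : T*Q × ℝ → Q × ℝ`
with `γ_t` closed for each fixed `t`, the vector fields `R_H` and `R_H^γ = Tπ ∘ R_H ∘ γ`
are `γ`-related (`Tγ(R_H^γ) = R_H ∘ γ`) if and only if the Hamilton–Jacobi equation
`∂γʲ/∂t + Σᵢ (∂H/∂pᵢ ∘ γ) ∂γʲ/∂qⁱ + ∂H/∂qʲ ∘ γ = 0` holds for all `j`. -/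
theorem cosymplectic_hamilton_jacobi (n : ℕ)
    (H : (Fin n → ℝ) × (Fin n → ℝ) × ℝ → ℝ) (hH : ContDiff ℝ (⊤ : ℕ∞) H)
    (γ : (Fin n → ℝ) × ℝ → Fin n → ℝ) (hγ : ContDiff ℝ (⊤ : ℕ∞) γ)
    (hclosed : ∀ (x : (Fin n → ℝ) × ℝ) (i j : Fin n),
      fderiv ℝ γ x (Pi.single i 1, 0) j = fderiv ℝ γ x (Pi.single j 1, 0) i) :
    (∀ x : (Fin n → ℝ) × ℝ,
        fderiv ℝ (sectionLift n γ) x (RHproj n H γ x) = RH n H (sectionLift n γ x)) ↔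
      ∀ (x : (Fin n → ℝ) × ℝ) (j : Fin n),
        fderiv ℝ γ x (0, 1) j
          + (∑ i, Hp n H i (sectionLift n γ x) * fderiv ℝ γ x (Pi.single i 1, 0) j)
          + Hq n H j (sectionLift n γ x) = 0 := by
  have key : ∀ x : (Fin n → ℝ) × ℝ,
      fderiv ℝ (sectionLift n γ) x (RHproj n H γ x)
        = (fun i => Hp n H i (sectionLift n γ x),
           fderiv ℝ γ x (RHproj n H γ x), 1) := by
    intro x
    have : sectionLift n γ = fun x : (Fin n → ℝ) × ℝ => ((x.1 : Fin n → ℝ), γ x, x.2) := rfl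
    rw [this, sectionLift_fderiv' n γ hγ x]
    rfl
  constructor
  · intro h x j
    have hx := h x
    rw [key x] at hx
    have h2 : fderiv ℝ γ x (RHproj n H γ x) = fun i => -Hq n H i (sectionLift n γ x) :=
      congrArg (fun z => z.2.1) hx
    have h3 := congrFun h2 j
    have h4 := fderiv_decomp n γ x (fun i => Hp n H i (sectionLift n γ x)) j
    simp only [RHproj] at h3
    rw [h4] at h3
    linarith
  · intro h x
    rw [key x]
    have h2 : fderiv ℝ γ x (RHproj n H γ x) = fun i => -Hq n H i (sectionLift n γ x) := by
      funext j
      have h3 := h x j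
      have h4 := fderiv_decomp n γ x (fun i => Hp n H i (sectionLift n γ x)) j
      simp only [RHproj]
      rw [h4]
      linarith
    rw [h2]
    rfl
end

section
/- Let H: T*Q × ℝ → ℝ and γ a section of π: T*Q × ℝ → Q × ℝ, written γ(q, t) = (q, γʲ(q, t), t), such that the 1-form γ_t = Σⱼ γʲ dqʲ is closed on Q for each fixed t. Define X_H^γ = Tπ ∘ X_H ∘ γ with X_H the contact Hamiltonian vector field of the contact form η = dt − Σᵢ pᵢ dqⁱ. Then X_H and X_H^γ are γ-related if and only if, along γ, γʲ ∂H/∂t + ∂H/∂qʲ + (Σᵢ γᵢ ∂H/∂pᵢ − H) ∂γʲ/∂t + Σᵢ (∂H/∂pᵢ) ∂γʲ/∂qⁱ = 0 for all j. -/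
/-- The contact Hamiltonian vector field
`X_H = (Σᵢ pᵢ ∂H/∂pᵢ − H) ∂/∂t − Σᵢ (pᵢ ∂H/∂t + ∂H/∂qⁱ) ∂/∂pᵢ + Σᵢ (∂H/∂pᵢ) ∂/∂qⁱ`
of the contact form `η = dt − Σᵢ pᵢ dqⁱ`, in coordinates `z = (q, p, t)`. -/
noncomputable def XH (n : ℕ) (H : (Fin n → ℝ) × (Fin n → ℝ) × ℝ → ℝ)
    (z : (Fin n → ℝ) × (Fin n → ℝ) × ℝ) : (Fin n → ℝ) × (Fin n → ℝ) × ℝ :=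
  (fun i => Hp n H i z,
   fun i => -(z.2.1 i * Ht n H z + Hq n H i z),
   (∑ i, z.2.1 i * Hp n H i z) - H z)

/-- The projected vector field `X_H^γ = Tπ ∘ X_H ∘ γ` on `Q × ℝ`. -/
noncomputable def XHproj (n : ℕ) (H : (Fin n → ℝ) × (Fin n → ℝ) × ℝ → ℝ)
    (γ : (Fin n → ℝ) × ℝ → Fin n → ℝ) (x : (Fin n → ℝ) × ℝ) : (Fin n → ℝ) × ℝ :=
  (fun i => Hp n H i (sectionLift n γ x),
   (∑ i, γ x i * Hp n H i (sectionLift n γ x)) - H (sectionLift n γ x))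

lemma clm_decomp (n : ℕ) (L : ((Fin n → ℝ) × ℝ) →L[ℝ] (Fin n → ℝ)) (a : Fin n → ℝ)
    (s : ℝ) (j : Fin n) :
    L (a, s) j = (∑ i, a i * L (Pi.single i 1, 0) j) + s * L (0, 1) j := by
  have hexp : (a, s) = (∑ i, a i • ((Pi.single i 1 : Fin n → ℝ), (0 : ℝ)))
      + s • ((0 : Fin n → ℝ), (1 : ℝ)) := by
    refine Prod.ext ?_ ?_
    · show a = _
      funext k
      rw [Prod.fst_add, Prod.fst_sum]
      simp [Finset.sum_apply, Pi.single_apply, mul_ite, Finset.sum_ite_eq']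
    · show s = _
      rw [Prod.snd_add, Prod.snd_sum]
      simp
  calc L (a, s) j = L ((∑ i, a i • ((Pi.single i 1 : Fin n → ℝ), (0 : ℝ)))
      + s • ((0 : Fin n → ℝ), (1 : ℝ))) j := by rw [← hexp]
    _ = (∑ i, a i * L (Pi.single i 1, 0) j) + s * L (0, 1) j := by
      rw [map_add, map_smul, map_sum]
      simp only [map_smul, Pi.add_apply, Finset.sum_apply, Pi.smul_apply, smul_eq_mul]

/-- for a section `γ(q,t) = (q, γʲ(q,t), t)` of `π : T*Q × ℝ → Q × ℝ`
with `γ_t = Σⱼ γʲ dqʲ` closed on `Q` for each fixed `t`, the vector fields `X_H` and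
`X_H^γ = Tπ ∘ X_H ∘ γ` are `γ`-related (`Tγ(X_H^γ) = X_H ∘ γ`) if and only if, along
`γ`, the contact Hamilton–Jacobi equation
`γʲ ∂H/∂t + ∂H/∂qʲ + (Σᵢ γᵢ ∂H/∂pᵢ − H) ∂γʲ/∂t + Σᵢ (∂H/∂pᵢ) ∂γʲ/∂qⁱ = 0` holds for
all `j` (all partial derivatives of `H` being evaluated at `γ(q, t)`). -/
theorem contact_hamilton_jacobi (n : ℕ)
    (H : (Fin n → ℝ) × (Fin n → ℝ) × ℝ → ℝ) (hH : ContDiff ℝ (⊤ : ℕ∞) H)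
    (γ : (Fin n → ℝ) × ℝ → Fin n → ℝ) (hγ : ContDiff ℝ (⊤ : ℕ∞) γ)
    (hclosed : ∀ (x : (Fin n → ℝ) × ℝ) (i j : Fin n),
      fderiv ℝ γ x (Pi.single i 1, 0) j = fderiv ℝ γ x (Pi.single j 1, 0) i) :
    (∀ x : (Fin n → ℝ) × ℝ,
        fderiv ℝ (sectionLift n γ) x (XHproj n H γ x) = XH n H (sectionLift n γ x)) ↔
      ∀ (x : (Fin n → ℝ) × ℝ) (j : Fin n),
        γ x j * Ht n H (sectionLift n γ x) + Hq n H j (sectionLift n γ x)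
          + ((∑ i, γ x i * Hp n H i (sectionLift n γ x)) - H (sectionLift n γ x))
              * fderiv ℝ γ x (0, 1) j
          + (∑ i, Hp n H i (sectionLift n γ x) * fderiv ℝ γ x (Pi.single i 1, 0) j) = 0 := by
  
  have hdγ : ∀ x : (Fin n → ℝ) × ℝ, DifferentiableAt ℝ γ x :=
    fun x => (hγ.differentiable (by simp)) x
  have hlift : ∀ (x : (Fin n → ℝ) × ℝ) (v : (Fin n → ℝ) × ℝ),
      fderiv ℝ (sectionLift n γ) x v = (v.1, fderiv ℝ γ x v, v.2) := by
    intro x v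
    have h : HasFDerivAt (sectionLift n γ)
        ((ContinuousLinearMap.fst ℝ (Fin n → ℝ) ℝ).prod
          (((fderiv ℝ γ x)).prod (ContinuousLinearMap.snd ℝ (Fin n → ℝ) ℝ))) x := by
      exact HasFDerivAt.prodMk (hasFDerivAt_fst) (HasFDerivAt.prodMk ((hdγ x).hasFDerivAt) hasFDerivAt_snd)
    rw [h.fderiv]; rfl
  constructor
  · intro h x j
    have h2 := congrArg (fun z => z.2.1 j) (h x)
    simp only [hlift, XH, XHproj] at h2
    rw [clm_decomp] at h2
    simp only [sectionLift] at h2 ⊢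
    linarith [h2]
  · intro h x
    have hj := h x
    rw [hlift]
    refine Prod.ext rfl (Prod.ext ?_ rfl)
    funext j
    have := hj j
    show fderiv ℝ γ x (XHproj n H γ x) j = _
    rw [show XHproj n H γ x = ((fun i => Hp n H i (sectionLift n γ x)),
      (∑ i, γ x i * Hp n H i (sectionLift n γ x)) - H (sectionLift n γ x)) from rfl]
    rw [clm_decomp]
    simp only [XH, sectionLift]
    simp only [sectionLift] at this
    linarith [this]
end
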